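/- arXiv:0804.4388 — 2 statements merged into one kernel-verified Lean document; each statement's English description precedes it below -/
import Mathlib

section
/- Let β > 1 and t > 0. Let σ(t,β) ∈ (0,1) be implicitly defined by p(t)·σ/√(1-σ²) + q(t)·σ/√(β²-σ²) = 1, where q(t) = ⌊t+1⌋/2 if ⌊t⌋ is odd and q(t) = t - ⌊t⌋/2 if ⌊t⌋ is even, and p(t) = t+1-q(t). Then σ(t,β) > 1/√((1+t)² + 1). -/
/-! Since `β > 1` and `q(t) > 0`, replacing `√(β² - σ²)` by `√(1 - σ²)` strictly increases the
left-hand side, so `(1 + t) σ / √(1 - σ²) > 1` because `p + q = 1 + t`. Squaring turns this into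
`σ² ((1 + t)² + 1) > 1`. -/

open Real

noncomputable def qth (t : ℝ) : ℝ :=
  if Odd ⌊t⌋ then (⌊t + 1⌋ : ℝ) / 2 else t - (⌊t⌋ : ℝ) / 2

noncomputable def pth (t : ℝ) : ℝ := t + 1 - qth t

/- The parity of `⌊t⌋` is irrelevant here: in the odd case `⌊t + 1⌋ ≥ 1`, and in the even case
`2 qth t = t + (t - ⌊t⌋) ≥ t`. -/
lemma qth_pos {t : ℝ} (ht : 0 < t) : 0 < qth t := by
  unfold qth
  split_ifs
  · have : (1 : ℤ) ≤ ⌊t + 1⌋ := Int.le_floor.2 (by push_cast; linarith)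
    have : (1 : ℝ) ≤ ⌊t + 1⌋ := by exact_mod_cast this
    linarith
  · linarith [Int.floor_le t]

lemma pth_add_qth (t : ℝ) : pth t + qth t = 1 + t := by
  unfold pth
  ring

lemma one_div_sqrt_sq_add_one_lt {c σ : ℝ} (hσ : 0 < σ) (hσ1 : σ < 1)
    (h : 1 < c * σ / √(1 - σ ^ 2)) : 1 / √(c ^ 2 + 1) < σ := by
  have hs : 0 < √(1 - σ ^ 2) := sqrt_pos.2 (by nlinarith)
  have hlt : √(1 - σ ^ 2) < c * σ := by rwa [one_lt_div hs] at h
  have hsq : 1 - σ ^ 2 < (c * σ) ^ 2 := (sqrt_lt' (hs.trans hlt)).1 hlt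
  have hprod : 1 < √(c ^ 2 + 1) * σ := by
    rw [← sqrt_sq hσ.le, ← sqrt_mul (by positivity)]
    exact (lt_sqrt zero_le_one).2 (by nlinarith)
  rwa [div_lt_iff₀ (by positivity), mul_comm]

theorem stmt_3 (β t : ℝ) (hβ : 1 < β) (ht : 0 < t) (σ : ℝ)
    (hrange : σ ∈ Set.Ioo (0 : ℝ) 1)
    (heq : pth t * σ / Real.sqrt (1 - σ ^ 2)
        + qth t * σ / Real.sqrt (β ^ 2 - σ ^ 2) = 1) :
    σ > 1 / Real.sqrt ((1 + t) ^ 2 + 1) := by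
  obtain ⟨hσ0, hσ1⟩ := hrange
  have hs : 0 < √(1 - σ ^ 2) := sqrt_pos.2 (by nlinarith)
  have hsβ : √(1 - σ ^ 2) < √(β ^ 2 - σ ^ 2) := sqrt_lt_sqrt (by nlinarith) (by nlinarith)
  have hq : qth t * σ / √(β ^ 2 - σ ^ 2) < qth t * σ / √(1 - σ ^ 2) :=
    div_lt_div_of_pos_left (mul_pos (qth_pos ht) hσ0) hs hsβ
  refine one_div_sqrt_sq_add_one_lt hσ0 hσ1 ?_
  calc 1 < pth t * σ / √(1 - σ ^ 2) + qth t * σ / √(1 - σ ^ 2) := by linarith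
    _ = (1 + t) * σ / √(1 - σ ^ 2) := by rw [← pth_add_qth, add_mul, add_div]
end

section
/- Let 1 < β < √(3/2). Then there exists a unique t₀ > 0 with σ(t₀,β) = √(β²-1), and for t in the union of intervals (2k, 2k+1), k ∈ ℕ: l_t(t,β) < 0 if t < t₀ and l_t(t,β) > 0 if t > t₀. -/
open Real

lemma floor_half {k : ℤ} {t : ℝ} (h1 : (2*k : ℝ) ≤ t) (h2 : t < 2*k + 2) :
    ⌊t/2⌋ = k := by
  rw [Int.floor_eq_iff]
  constructor
  · push_cast; linarith
  · push_cast; linarith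

lemma qth_eq_min (t : ℝ) : qth t = min (t - (⌊t/2⌋ : ℝ)) ((⌊t/2⌋ : ℝ) + 1) := by
  have hfl : ((⌊t⌋ : ℤ) : ℝ) ≤ t := Int.floor_le t
  have hfu : t < (⌊t⌋ : ℝ) + 1 := Int.lt_floor_add_one t
  rcases Int.even_or_odd ⌊t⌋ with ⟨k, hk⟩ | ⟨k, hk⟩
  · -- ⌊t⌋ = k + k
    have hne : ¬ Odd ⌊t⌋ := by rw [Int.not_odd_iff_even]; exact ⟨k, hk⟩
    rw [hk] at hfl hfu
    have hfloor : ⌊t/2⌋ = k := floor_half (by push_cast at hfl ⊢; linarith)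
      (by push_cast at hfu ⊢; linarith)
    rw [qth, if_neg hne, hk, hfloor]
    have h1 : t - (k : ℝ) ≤ (k : ℝ) + 1 := by push_cast at hfu; linarith
    rw [min_eq_left h1]
    push_cast
    ring
  · -- ⌊t⌋ = 2k+1
    have hodd : Odd ⌊t⌋ := ⟨k, hk⟩
    rw [hk] at hfl hfu
    have hfloor : ⌊t/2⌋ = k := floor_half (by push_cast at hfl ⊢; linarith)
      (by push_cast at hfu ⊢; linarith)
    have hft1 : ⌊t + 1⌋ = 2*k + 2 := by
      rw [Int.floor_add_one, hk]; ring
    rw [qth, if_pos hodd, hft1, hfloor]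
    have h1 : (k : ℝ) + 1 ≤ t - (k : ℝ) := by push_cast at hfl; linarith
    rw [min_eq_right h1]
    push_cast
    ring

lemma pth_eq_max (t : ℝ) : pth t = max (t - (⌊t/2⌋ : ℝ)) ((⌊t/2⌋ : ℝ) + 1) := by
  rw [pth, qth_eq_min]
  rcases le_total (t - (⌊t/2⌋ : ℝ)) ((⌊t/2⌋ : ℝ) + 1) with h | h
  · rw [min_eq_left h, max_eq_right h]; ring
  · rw [min_eq_right h, max_eq_left h]; ring

lemma pq_sum (t : ℝ) : pth t + qth t = t + 1 := by rw [pth]; ring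

lemma qth_mono : Monotone qth := by
  intro t1 t2 h
  rw [qth_eq_min, qth_eq_min]
  have hn : ⌊t1/2⌋ ≤ ⌊t2/2⌋ := Int.floor_le_floor (by linarith)
  have hnr : ((⌊t1/2⌋ : ℤ) : ℝ) ≤ ((⌊t2/2⌋ : ℤ) : ℝ) := by exact_mod_cast hn
  have h2 : ((⌊t2/2⌋ : ℤ) : ℝ) ≤ t2/2 := Int.floor_le _
  apply le_min
  · rcases eq_or_lt_of_le hn with he | hlt
    · calc min (t1 - (⌊t1/2⌋:ℝ)) ((⌊t1/2⌋:ℝ) + 1) ≤ t1 - (⌊t1/2⌋:ℝ) := min_le_left _ _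
        _ ≤ t2 - (⌊t2/2⌋:ℝ) := by rw [← he]; linarith
    · have hlt' : ((⌊t1/2⌋:ℤ):ℝ) + 1 ≤ ((⌊t2/2⌋:ℤ):ℝ) := by exact_mod_cast hlt
      calc min (t1 - (⌊t1/2⌋:ℝ)) ((⌊t1/2⌋:ℝ) + 1) ≤ (⌊t1/2⌋:ℝ) + 1 := min_le_right _ _
        _ ≤ t2 - (⌊t2/2⌋:ℝ) := by linarith
  · calc min (t1 - (⌊t1/2⌋:ℝ)) ((⌊t1/2⌋:ℝ) + 1) ≤ (⌊t1/2⌋:ℝ) + 1 := min_le_right _ _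
      _ ≤ (⌊t2/2⌋:ℝ) + 1 := by linarith

lemma pth_mono : Monotone pth := by
  intro t1 t2 h
  rw [pth_eq_max, pth_eq_max]
  have hn : ⌊t1/2⌋ ≤ ⌊t2/2⌋ := Int.floor_le_floor (by linarith)
  have hnr : ((⌊t1/2⌋ : ℤ) : ℝ) ≤ ((⌊t2/2⌋ : ℤ) : ℝ) := by exact_mod_cast hn
  have h1 : t1/2 < (⌊t1/2⌋:ℝ) + 1 := Int.lt_floor_add_one _
  apply max_le
  · rcases eq_or_lt_of_le hn with he | hlt
    · calc t1 - (⌊t1/2⌋:ℝ) ≤ t2 - (⌊t2/2⌋:ℝ) := by rw [← he]; linarith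
        _ ≤ max (t2 - (⌊t2/2⌋:ℝ)) ((⌊t2/2⌋:ℝ) + 1) := le_max_left _ _
    · have hlt' : ((⌊t1/2⌋:ℤ):ℝ) + 1 ≤ ((⌊t2/2⌋:ℤ):ℝ) := by exact_mod_cast hlt
      calc t1 - (⌊t1/2⌋:ℝ) ≤ (⌊t2/2⌋:ℝ) + 1 := by linarith
        _ ≤ max (t2 - (⌊t2/2⌋:ℝ)) ((⌊t2/2⌋:ℝ) + 1) := le_max_right _ _
  · calc (⌊t1/2⌋:ℝ) + 1 ≤ (⌊t2/2⌋:ℝ) + 1 := by linarith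
      _ ≤ max (t2 - (⌊t2/2⌋:ℝ)) ((⌊t2/2⌋:ℝ) + 1) := le_max_right _ _

lemma qth_nonneg {t : ℝ} (ht : 0 ≤ t) : 0 ≤ qth t := by
  rw [qth_eq_min]
  have h0 : (0:ℤ) ≤ ⌊t/2⌋ := Int.floor_nonneg.2 (by linarith)
  have h0r : (0:ℝ) ≤ (⌊t/2⌋:ℝ) := by exact_mod_cast h0
  have h1 : ((⌊t/2⌋:ℤ):ℝ) ≤ t/2 := Int.floor_le _
  apply le_min <;> linarith

lemma pth_ge_one {t : ℝ} (ht : 0 ≤ t) : 1 ≤ pth t := by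
  rw [pth_eq_max]
  have h0 : (0:ℤ) ≤ ⌊t/2⌋ := Int.floor_nonneg.2 (by linarith)
  have h0r : (0:ℝ) ≤ (⌊t/2⌋:ℝ) := by exact_mod_cast h0
  calc (1:ℝ) ≤ (⌊t/2⌋:ℝ) + 1 := by linarith
    _ ≤ _ := le_max_right _ _

lemma qth_abs_form (t : ℝ) : qth t = (t + 1 - |2 * Int.fract (t/2) - 1|) / 2 := by
  rw [qth_eq_min]
  have hf : Int.fract (t/2) = t/2 - (⌊t/2⌋:ℝ) := rfl
  rcases le_total (t - (⌊t/2⌋:ℝ)) ((⌊t/2⌋:ℝ) + 1) with h | h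
  · rw [min_eq_left h, abs_of_nonpos (by rw [hf]; linarith), hf]; ring
  · rw [min_eq_right h, abs_of_nonneg (by rw [hf]; linarith), hf]; ring

lemma qth_continuous : Continuous qth := by
  have hg : Continuous fun t : ℝ => |2 * Int.fract (t/2) - 1| := by
    have h := ContinuousOn.comp_fract
      (f := fun (_ : ℝ) (y : ℝ) => |2 * y - 1|) (s := fun t : ℝ => t/2)
      (by
        apply Continuous.continuousOn
        have : Continuous fun p : ℝ × ℝ => |2 * p.2 - 1| := by fun_prop
        exact this)
      (by fun_prop)
      (by intro s; norm_num)
    exact h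
  have : qth = fun t => (t + 1 - |2 * Int.fract (t/2) - 1|) / 2 :=
    funext qth_abs_form
  rw [this]
  fun_prop

lemma pth_continuous : Continuous pth := by
  have : pth = fun t => t + 1 - qth t := rfl
  rw [this]
  exact (continuous_id.add continuous_const).sub qth_continuous

lemma aux_mono {c x y : ℝ} (hx : 0 ≤ x) (hxy : x < y) (hy : y^2 < c) :
    x / Real.sqrt (c - x^2) < y / Real.sqrt (c - y^2) := by
  have hx2 : x^2 < y^2 := by nlinarith
  have h1 : 0 < c - y^2 := by linarith
  have h2 : 0 < c - x^2 := by linarith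
  have hs1 : 0 < Real.sqrt (c - y^2) := Real.sqrt_pos.2 h1
  have hs2 : Real.sqrt (c - y^2) ≤ Real.sqrt (c - x^2) := Real.sqrt_le_sqrt (by linarith)
  calc x / Real.sqrt (c - x^2) ≤ x / Real.sqrt (c - y^2) :=
        div_le_div_of_nonneg_left hx hs1 hs2
    _ < y / Real.sqrt (c - y^2) := by
        gcongr

set_option maxHeartbeats 1000000 in
theorem stmt_6 (β : ℝ) (hβ : 1 < β) (hβ' : β < Real.sqrt (3 / 2))
    (σ l : ℝ → ℝ)
    (hrange : ∀ t : ℝ, 0 ≤ t → σ t ∈ Set.Ioo (0 : ℝ) 1)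
    (heq : ∀ t : ℝ, 0 ≤ t →
      pth t * σ t / Real.sqrt (1 - (σ t) ^ 2)
        + qth t * σ t / Real.sqrt (β ^ 2 - (σ t) ^ 2) = 1)
    (hl : ∀ t : ℝ, 0 ≤ t →
      l t = pth t / Real.sqrt (1 - (σ t) ^ 2)
        + β ^ 2 * qth t / Real.sqrt (β ^ 2 - (σ t) ^ 2) - t - Real.sqrt 2)
    (hder : ∀ k : ℕ, ∀ t ∈ Set.Ioo (2 * (k : ℝ)) (2 * (k : ℝ) + 1),
      deriv l t = Real.sqrt (β ^ 2 - (σ t) ^ 2) - 1) :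
    ∃ t₀ : ℝ, 0 < t₀ ∧ σ t₀ = Real.sqrt (β ^ 2 - 1) ∧
      (∀ t' : ℝ, 0 < t' → σ t' = Real.sqrt (β ^ 2 - 1) → t' = t₀) ∧
      (∀ k : ℕ, ∀ t ∈ Set.Ioo (2 * (k : ℝ)) (2 * (k : ℝ) + 1),
        (t < t₀ → deriv l t < 0) ∧ (t₀ < t → 0 < deriv l t)) := by
  set s := Real.sqrt (β ^ 2 - 1) with hs_def
  have hβ2 : β ^ 2 < 3/2 := by
    have h32 : Real.sqrt (3/2) ^ 2 = 3/2 := Real.sq_sqrt (by norm_num)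
    nlinarith [Real.sqrt_nonneg (3/2 : ℝ)]
  have hs2 : s ^ 2 = β ^ 2 - 1 := Real.sq_sqrt (by nlinarith)
  have hs_pos : 0 < s := Real.sqrt_pos.2 (by nlinarith)
  have hs_lt1 : s < 1 := by nlinarith
  have hβs : Real.sqrt (β ^ 2 - s ^ 2) = 1 := by
    rw [show β ^ 2 - s ^ 2 = 1 by linarith, Real.sqrt_one]
  set A := s / Real.sqrt (1 - s ^ 2) with hA_def
  have h1s2 : 0 < 1 - s ^ 2 := by nlinarith
  have hsq_pos : 0 < Real.sqrt (1 - s ^ 2) := Real.sqrt_pos.2 h1s2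
  have hsq_le1 : Real.sqrt (1 - s ^ 2) ≤ 1 := by
    calc Real.sqrt (1 - s ^ 2) ≤ Real.sqrt 1 := Real.sqrt_le_sqrt (by nlinarith)
      _ = 1 := Real.sqrt_one
  have hA_ge : s ≤ A := by
    rw [hA_def, le_div_iff₀ hsq_pos]
    nlinarith
  have hA_lt1 : A < 1 := by
    rw [hA_def, div_lt_one hsq_pos]
    exact (Real.lt_sqrt hs_pos.le).2 (by nlinarith)
  set G : ℝ → ℝ := fun t => pth t * A + qth t * s with hG_def
  -- G t equals the Snell functional at σ = s
  have hGval : ∀ t : ℝ, G t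
      = pth t * s / Real.sqrt (1 - s ^ 2) + qth t * s / Real.sqrt (β ^ 2 - s ^ 2) := by
    intro t
    rw [hG_def]
    simp only [hβs, div_one, hA_def]
    ring
  -- monotonicity of the functional in σ
  have hFmono : ∀ t : ℝ, 0 ≤ t → ∀ x y : ℝ, 0 ≤ x → x < y → y < 1 →
      pth t * x / Real.sqrt (1 - x ^ 2) + qth t * x / Real.sqrt (β ^ 2 - x ^ 2)
        < pth t * y / Real.sqrt (1 - y ^ 2) + qth t * y / Real.sqrt (β ^ 2 - y ^ 2) := by
    intro t ht x y hx hxy hy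
    have h1 := aux_mono (c := 1) hx hxy (by nlinarith)
    have h2 := aux_mono (c := β ^ 2) hx hxy (by nlinarith)
    have hp := pth_ge_one ht
    have hq := qth_nonneg ht
    rw [mul_div_assoc, mul_div_assoc, mul_div_assoc, mul_div_assoc]
    have e1 : pth t * (x / Real.sqrt (1 - x ^ 2)) < pth t * (y / Real.sqrt (1 - y ^ 2)) :=
      mul_lt_mul_of_pos_left h1 (by linarith)
    have e2 : qth t * (x / Real.sqrt (β ^ 2 - x ^ 2))
        ≤ qth t * (y / Real.sqrt (β ^ 2 - y ^ 2)) :=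
      mul_le_mul_of_nonneg_left h2.le hq
    linarith
  -- comparison of σ t with s in terms of G
  have hlt : ∀ t : ℝ, 0 ≤ t → σ t < s → 1 < G t := by
    intro t ht h
    have h0 := (hrange t ht).1
    have := hFmono t ht (σ t) s h0.le h hs_lt1
    rw [← hGval t] at this
    rw [← heq t ht]
    exact this
  have hgt : ∀ t : ℝ, 0 ≤ t → s < σ t → G t < 1 := by
    intro t ht h
    have h1 := (hrange t ht).2
    have := hFmono t ht s (σ t) hs_pos.le h h1
    rw [← hGval t] at this
    rw [← heq t ht]
    exact this
  have heqs : ∀ t : ℝ, 0 ≤ t → σ t = s → G t = 1 := by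
    intro t ht h
    rw [hGval t, ← h]
    exact heq t ht
  -- strict monotonicity of G
  have hGmono : ∀ t1 t2 : ℝ, 0 ≤ t1 → t1 < t2 → G t1 < G t2 := by
    intro t1 t2 ht1 h
    have hp := pth_mono h.le
    have hq := qth_mono h.le
    have hsu1 := pq_sum t1
    have hsu2 := pq_sum t2
    rw [hG_def]
    simp only
    nlinarith [pth_ge_one ht1, qth_nonneg ht1]
  -- values of G
  have hq0 : qth 0 = 0 := by
    rw [qth]
    norm_num
  have hp0 : pth 0 = 1 := by rw [pth, hq0]; ring
  have hG0 : G 0 = A := by rw [hG_def]; simp [hp0, hq0]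
  set T : ℝ := 1 / s with hT_def
  have hT_pos : 0 < T := by positivity
  have hGT : 1 < G T := by
    have hp := pth_ge_one hT_pos.le
    have hq := qth_nonneg hT_pos.le
    have hsu := pq_sum T
    have e1 : (pth T + qth T) * s = 1 + s := by
      rw [hsu, hT_def]; field_simp
    have e2 : pth T * s ≤ pth T * A := mul_le_mul_of_nonneg_left hA_ge (by linarith)
    rw [hG_def]
    simp only
    nlinarith
  -- existence of t₀ by IVT
  have hGcont : Continuous G := by
    rw [hG_def]
    exact (pth_continuous.mul continuous_const).add (qth_continuous.mul continuous_const)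
  have hIVT := intermediate_value_Icc hT_pos.le hGcont.continuousOn
  have h1mem : (1:ℝ) ∈ Set.Icc (G 0) (G T) := ⟨by rw [hG0]; exact hA_lt1.le, hGT.le⟩
  obtain ⟨t₀, ht₀mem, hGt₀⟩ := hIVT h1mem
  have ht₀pos : 0 < t₀ := by
    rcases eq_or_lt_of_le ht₀mem.1 with he | h
    · exfalso; rw [← he, hG0] at hGt₀; linarith
    · exact h
  have hσt₀ : σ t₀ = s := by
    rcases lt_trichotomy (σ t₀) s with h | h | h
    · have := hlt t₀ ht₀pos.le h; linarith
    · exact h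
    · have := hgt t₀ ht₀pos.le h; linarith
  refine ⟨t₀, ht₀pos, hσt₀, ?_, ?_⟩
  · intro t' ht' hσ'
    have hG' : G t' = 1 := heqs t' ht'.le hσ'
    rcases lt_trichotomy t' t₀ with h | h | h
    · have := hGmono t' t₀ ht'.le h; linarith
    · exact h
    · have := hGmono t₀ t' ht₀pos.le h; linarith
  · intro k t htmem
    have htpos : 0 < t := lt_of_le_of_lt (by positivity) htmem.1
    have hderiv := hder k t htmem
    have h0 := (hrange t htpos.le).1
    have h1 := (hrange t htpos.le).2
    constructor
    · intro hlt_t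
      have hGt : G t < 1 := by
        have := hGmono t t₀ htpos.le hlt_t
        linarith
      have hσgt : s < σ t := by
        rcases lt_trichotomy (σ t) s with h | h | h
        · have := hlt t htpos.le h; linarith
        · have := heqs t htpos.le h; linarith
        · exact h
      have harg : 0 ≤ β ^ 2 - σ t ^ 2 := by nlinarith
      have : Real.sqrt (β ^ 2 - σ t ^ 2) < 1 := by
        calc Real.sqrt (β ^ 2 - σ t ^ 2) < Real.sqrt 1 := Real.sqrt_lt_sqrt harg (by nlinarith)
          _ = 1 := Real.sqrt_one
      rw [hderiv]; linarith
    · intro hgt_t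
      have hGt : 1 < G t := by
        have := hGmono t₀ t ht₀pos.le hgt_t
        linarith
      have hσlt : σ t < s := by
        rcases lt_trichotomy (σ t) s with h | h | h
        · exact h
        · have := heqs t htpos.le h; linarith
        · have := hgt t htpos.le h; linarith
      have : 1 < Real.sqrt (β ^ 2 - σ t ^ 2) := by
        exact (Real.lt_sqrt (by norm_num)).2 (by nlinarith)
      rw [hderiv]; linarith
end
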